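/- If N is a nilpotent group of orientation-preserving C² diffeomorphisms of the real line ℝ and every element of N has at least one fixed point, then N is abelian. -/

import Mathlib

/-- `f` is an orientation-preserving `C^n` diffeomorphism of `ℝ`: a `C^n`
bijection of `ℝ` with everywhere positive derivative (its inverse is then
automatically `C^n`). -/
def IsDiffeoR (n : WithTop ℕ∞) (f : ℝ → ℝ) : Prop :=
  Function.Bijective f ∧ ContDiff ℝ n f ∧ ∀ x : ℝ, 0 < deriv f x

/-!
A non-abelian nilpotent group contains a nontrivial central commutator `c = ⁅a, b⁆`. Its fixed
point set is closed, nonempty and invariant under the whole group, and Kopell's lemma shows that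
an element with a fixed point cannot move a finite endpoint of a component `I` of its complement;
hence `I` is invariant. On `I` the central element `c` acts without fixed points, so the points
`c ^ k • x₀` cut `I` into fundamental domains and every element acts on them as a translation up
to an error of one domain. Since `a² b² = c⁴ b² a²`, the translation amounts of both sides would
differ by four, which is impossible.

Kopell's lemma: let `f, g` be commuting diffeomorphisms, `f` of class `C²` and `g` of class `C¹`,
with `f u = u`, `f x < x` on `(u, y]` and `g y = y`. The `C²` hypothesis bounds the distortion of
the iterates `f^[n]` on the fundamental domain `[f y, y]`; as `f^[n]` pushes this domain into `u`,
where `g' = 1`, the iterates `g^[m]` have derivatives uniformly bounded below on it. An orbit of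
`g` in a bounded interval with such derivative bounds must be constant.
-/

open Set Filter Topology Function
open scoped commutatorElement

namespace IsDiffeoR
variable {n : WithTop ℕ∞} {f g : ℝ → ℝ}

theorem differentiable (hf : IsDiffeoR n f) : Differentiable ℝ f := fun x =>
  differentiableAt_of_deriv_ne_zero (hf.2.2 x).ne'

theorem strictMono (hf : IsDiffeoR n f) : StrictMono f :=
  strictMono_of_deriv_pos hf.2.2

theorem continuous (hf : IsDiffeoR n f) : Continuous f :=
  hf.differentiable.continuous

theorem of_le {m : WithTop ℕ∞} (hf : IsDiffeoR n f) (hmn : m ≤ n) : IsDiffeoR m f :=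
  ⟨hf.1, hf.2.1.of_le hmn, hf.2.2⟩

theorem continuous_deriv (hf : IsDiffeoR n f) (hn : 1 ≤ n) : Continuous (deriv f) :=
  hf.2.1.continuous_deriv hn

theorem contDiff_deriv (hf : IsDiffeoR 2 f) : ContDiff ℝ 1 (deriv f) :=
  ContDiff.deriv' (n := 1) hf.2.1

theorem comp (hf : IsDiffeoR n f) (hg : IsDiffeoR n g) : IsDiffeoR n (f ∘ g) := by
  refine ⟨hf.1.comp hg.1, hf.2.1.comp hg.2.1, fun x => ?_⟩
  rw [deriv_comp x (hf.differentiable _) (hg.differentiable _)]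
  exact mul_pos (hf.2.2 _) (hg.2.2 x)

theorem iterate (hf : IsDiffeoR n f) : ∀ m : ℕ, IsDiffeoR n f^[m]
  | 0 => ⟨bijective_id, contDiff_id, fun x => by simp⟩
  | m + 1 => by rw [iterate_succ]; exact (hf.iterate m).comp hf

theorem exists_inverse (hf : IsDiffeoR n f) :
    ∃ f' : ℝ → ℝ, IsDiffeoR n f' ∧ LeftInverse f' f ∧ RightInverse f' f := by
  set e := (hf.strictMono.orderIsoOfSurjective f hf.1.2).toHomeomorph
  have hf' : ∀ y, HasDerivAt e.symm (deriv f (e.symm y))⁻¹ y := fun y =>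
    HasDerivAt.of_local_left_inverse e.symm.continuous.continuousAt
      (hf.differentiable _).hasDerivAt (hf.2.2 _).ne' (Eventually.of_forall e.apply_symm_apply)
  refine ⟨e.symm, ⟨e.symm.bijective, ?_, fun y => ?_⟩, e.symm_apply_apply, e.apply_symm_apply⟩
  · exact e.contDiff_symm_deriv (fun x => (hf.2.2 x).ne')
      (fun x => (hf.differentiable x).hasDerivAt) hf.2.1
  · rw [(hf' y).deriv]; exact inv_pos.2 (hf.2.2 _)

end IsDiffeoR

def negConj (f : ℝ → ℝ) : ℝ → ℝ := fun x => -f (-x)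

@[simp] theorem negConj_apply (f : ℝ → ℝ) (x : ℝ) : negConj f x = -f (-x) := rfl

theorem IsDiffeoR.negConj {n : WithTop ℕ∞} {f : ℝ → ℝ} (hf : IsDiffeoR n f) :
    IsDiffeoR n (negConj f) := by
  have hneg : _root_.negConj f = Neg.neg ∘ f ∘ Neg.neg := rfl
  refine ⟨?_, ?_, fun x => ?_⟩
  · rw [hneg]; exact neg_involutive.bijective.comp (hf.1.comp neg_involutive.bijective)
  · rw [hneg]; exact contDiff_neg.comp (hf.2.1.comp contDiff_neg)
  · have h₁ : HasDerivAt (fun x => f (-x)) (deriv f (-x) * -1) x :=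
      (hf.differentiable (-x)).hasDerivAt.comp x (hasDerivAt_neg x)
    have h : HasDerivAt (_root_.negConj f) (deriv f (-x)) x := by
      rw [mul_neg_one] at h₁; exact neg_neg (deriv f (-x)) ▸ h₁.neg
    exact h.deriv ▸ hf.2.2 _

theorem Function.Commute.negConj {f g : ℝ → ℝ} (h : Function.Commute f g) :
    Function.Commute (negConj f) (negConj g) := fun x => by simp [h.eq]

section Contraction
variable {f : ℝ → ℝ} {u y : ℝ}

theorem mapsTo_Ioc_of_forall_lt (hf : StrictMono f) (hfu : f u = u)
    (hlt : ∀ x ∈ Ioc u y, f x < x) : MapsTo f (Ioc u y) (Ioc u y) := fun x hx =>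
  ⟨hfu ▸ hf hx.1, (hlt x hx).le.trans hx.2⟩

theorem tendsto_iterate_of_forall_lt (hf : StrictMono f) (hfc : Continuous f) (hfu : f u = u)
    (hlt : ∀ x ∈ Ioc u y, f x < x) {x : ℝ} (hx : x ∈ Ioc u y) :
    Tendsto (fun n => f^[n] x) atTop (𝓝 u) := by
  have hmem n : f^[n] x ∈ Ioc u y := (mapsTo_Ioc_of_forall_lt hf hfu hlt).iterate n hx
  have hanti : Antitone fun n => f^[n] x := hf.monotone.antitone_iterate_of_map_le (hlt x hx).le
  have hbdd : BddBelow (range fun n => f^[n] x) := ⟨u, by rintro _ ⟨n, rfl⟩; exact (hmem n).1.le⟩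
  have hlim := tendsto_atTop_ciInf hanti hbdd
  set L := ⨅ n, f^[n] x
  have hL : f L = L := isFixedPt_of_tendsto_iterate hlim hfc.continuousAt
  have huL : u ≤ L := le_ciInf fun n => (hmem n).1.le
  obtain rfl | huL := huL.eq_or_lt
  · exact hlim
  · exact absurd hL (hlt L ⟨huL, (ciInf_le hbdd 0).trans hx.2⟩).ne

theorem deriv_iterate_succ_apply' (hf : Differentiable ℝ f) (n : ℕ) (x : ℝ) :
    deriv f^[n + 1] x = deriv f (f^[n] x) * deriv f^[n] x := by
  rw [iterate_succ', deriv_comp x (hf _) (hf.iterate n x)]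

theorem log_deriv_iterate_sub_le {n : WithTop ℕ∞} (hf : IsDiffeoR n f) (huy : u < y)
    (hfu : f u = u) (hlt : ∀ x ∈ Ioc u y, f x < x) {L : NNReal}
    (hL : LipschitzOnWith L (fun x => Real.log (deriv f x)) (Icc u y)) (k : ℕ) :
    ∀ x ∈ Icc (f y) y, ∀ z ∈ Icc (f y) y,
      Real.log (deriv f^[k] z) - Real.log (deriv f^[k] x) ≤ L * (y - f^[k] y) := by
  have horbit i : f^[i] y ∈ Ioc u y :=
    (mapsTo_Ioc_of_forall_lt hf.strictMono hfu hlt).iterate i ⟨huy, le_rfl⟩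
  have hdom i x (hx : x ∈ Icc (f y) y) : f^[i] x ∈ Icc (f^[i + 1] y) (f^[i] y) := by
    have hmono := (hf.strictMono.iterate i).monotone
    exact ⟨iterate_succ_apply f i y ▸ hmono hx.1, hmono hx.2⟩
  have hpos i x : 0 < deriv f^[i] x := (hf.iterate i).2.2 x
  induction k with
  | zero => simp
  | succ k ih =>
    intro x hx z hz
    rw [deriv_iterate_succ_apply' hf.differentiable, deriv_iterate_succ_apply' hf.differentiable,
      Real.log_mul (hf.2.2 _).ne' (hpos k z).ne', Real.log_mul (hf.2.2 _).ne' (hpos k x).ne']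
    obtain ⟨hz₁, hz₂⟩ := hdom k z hz
    obtain ⟨hx₁, hx₂⟩ := hdom k x hx
    have hsub : Icc (f^[k + 1] y) (f^[k] y) ⊆ Icc u y :=
      Icc_subset_Icc (horbit (k + 1)).1.le (horbit k).2
    have hlip := hL.dist_le_mul _ (hsub ⟨hz₁, hz₂⟩) _ (hsub ⟨hx₁, hx₂⟩)
    rw [Real.dist_eq, Real.dist_eq] at hlip
    have hzx : |f^[k] z - f^[k] x| ≤ f^[k] y - f^[k + 1] y := by
      rw [abs_le]; constructor <;> linarith
    nlinarith [ih x hx z hz, (le_abs_self _).trans hlip, L.2]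

theorem exists_deriv_iterate_le_mul (hf : IsDiffeoR 2 f) (huy : u < y) (hfu : f u = u)
    (hlt : ∀ x ∈ Ioc u y, f x < x) :
    ∃ C, ∀ k, ∀ x ∈ Icc (f y) y, ∀ z ∈ Icc (f y) y, deriv f^[k] z ≤ C * deriv f^[k] x := by
  obtain ⟨L, hL⟩ := ((hf.contDiff_deriv.log fun x => (hf.2.2 x).ne').contDiffOn
    (s := Icc u y)).exists_lipschitzOnWith one_ne_zero (convex_Icc u y) isCompact_Icc
  refine ⟨Real.exp (L * (y - u)), fun k x hx z hz => ?_⟩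
  have hpos x : 0 < deriv f^[k] x := (hf.iterate k).2.2 x
  have hu : u < f^[k] y :=
    ((mapsTo_Ioc_of_forall_lt hf.strictMono hfu hlt).iterate k ⟨huy, le_rfl⟩).1
  calc deriv f^[k] z = Real.exp (Real.log (deriv f^[k] z)) := (Real.exp_log (hpos z)).symm
    _ ≤ Real.exp (L * (y - u) + Real.log (deriv f^[k] x)) := by
        gcongr
        nlinarith [log_deriv_iterate_sub_le hf huy hfu hlt hL k x hx z hz, L.2]
    _ = Real.exp (L * (y - u)) * deriv f^[k] x := by rw [Real.exp_add, Real.exp_log (hpos x)]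

end Contraction

theorem mul_sq_le_of_le_deriv {ψ : ℝ → ℝ} {a b δ : ℝ} (hψ : Differentiable ℝ ψ)
    (hle : ∀ x ∈ Icc a b, δ ≤ deriv ψ x) {x z : ℝ} (hx : x ∈ Icc a b) (hz : z ∈ Icc a b) :
    δ * (z - x) ^ 2 ≤ (ψ z - ψ x) * (z - x) := by
  have hmvt := (convex_Icc a b).mul_sub_le_image_sub_of_le_deriv hψ.continuous.continuousOn
    hψ.differentiableOn (fun w hw => hle w (interior_subset hw))
  rcases le_total x z with hxz | hzx
  · nlinarith [hmvt x hx z hz hxz]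
  · nlinarith [hmvt z hz x hx hzx]

theorem apply_eq_self_of_le_deriv_iterate {φ : ℝ → ℝ} {a b δ : ℝ} (hδ : 0 < δ)
    (hmaps : MapsTo φ (Icc a b) (Icc a b)) (hdiff : ∀ m, Differentiable ℝ φ^[m])
    (hle : ∀ m, ∀ x ∈ Icc a b, δ ≤ deriv φ^[m] x) {x : ℝ} (hx : x ∈ Icc a b) : φ x = x := by
  set d := φ x - x
  -- each step of the orbit moves by at least `δ |d|` in the direction of `d`, but the orbit
  -- stays in `Icc a b`
  have hstep m : δ * d ^ 2 ≤ (φ^[m + 1] x - φ^[m] x) * d := by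
    rw [iterate_succ_apply]
    exact mul_sq_le_of_le_deriv (hdiff m) (hle m) hx (hmaps hx)
  have hsum M : M * (δ * d ^ 2) ≤ (φ^[M] x - x) * d := by
    induction M with
    | zero => simp
    | succ M ih => push_cast; nlinarith [hstep M]
  have hbound M : (φ^[M] x - x) * d ≤ (b - a) * |d| := by
    have hM := hmaps.iterate M hx
    calc (φ^[M] x - x) * d ≤ |φ^[M] x - x| * |d| := by rw [← abs_mul]; exact le_abs_self _
      _ ≤ (b - a) * |d| := by
        gcongr; rw [abs_le]; constructor <;> linarith [hM.1, hM.2, hx.1, hx.2]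
  by_contra hne
  have hd : 0 < |d| := abs_pos.2 (sub_ne_zero.2 hne)
  obtain ⟨M, hM⟩ := exists_nat_gt ((b - a) / (δ * |d|))
  rw [div_lt_iff₀ (by positivity)] at hM
  have h := (hsum M).trans (hbound M)
  rw [← sq_abs, sq] at h
  linarith [mul_lt_mul_of_pos_right hM hd]

theorem deriv_eq_one_of_tendsto_isFixedPt {g : ℝ → ℝ} {u : ℝ} {s : ℕ → ℝ}
    (hg : DifferentiableAt ℝ g u) (hgu : g u = u) (hs : Tendsto s atTop (𝓝 u))
    (hsu : ∀ n, s n ≠ u) (hgs : ∀ n, g (s n) = s n) : deriv g u = 1 := by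
  have hs' : Tendsto s atTop (𝓝[≠] u) :=
    tendsto_nhdsWithin_of_tendsto_nhds_of_eventually_within _ hs (Eventually.of_forall hsu)
  have hslope := (hasDerivAt_iff_tendsto_slope.mp hg.hasDerivAt).comp hs'
  have h1 : ∀ n, (slope g u ∘ s) n = 1 := fun n => by
    simp [slope_def_field, hgs n, hgu, sub_ne_zero.2 (hsu n)]
  exact tendsto_nhds_unique (hslope.congr h1) tendsto_const_nhds

theorem deriv_iterate_mul_comm {f g : ℝ → ℝ} (hf : Differentiable ℝ f) (hg : Differentiable ℝ g)
    (hfg : Function.Commute f g) (m n : ℕ) (x : ℝ) :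
    deriv g^[m] (f^[n] x) * deriv f^[n] x = deriv f^[n] (g^[m] x) * deriv g^[m] x := by
  rw [← deriv_comp x (hg.iterate m _) (hf.iterate n x),
    ← deriv_comp x (hf.iterate n _) (hg.iterate m x), (hfg.iterate_iterate n m).comp_eq]

theorem IsPreconnected.forall_lt_or_forall_gt {s : Set ℝ} (hs : IsPreconnected s) {φ : ℝ → ℝ}
    (hφ : ContinuousOn φ s) (hne : ∀ x ∈ s, φ x ≠ x) :
    (∀ x ∈ s, φ x < x) ∨ ∀ x ∈ s, x < φ x := by
  by_contra! h
  obtain ⟨⟨a, ha, ha'⟩, ⟨b, hb, hb'⟩⟩ := h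
  obtain ⟨x, hx, hx'⟩ := hs.intermediate_value₂ ha hb continuousOn_id hφ ha' hb'
  exact hne x hx hx'.symm

section Kopell
variable {f g : ℝ → ℝ} {u y : ℝ}

theorem kopell_fundamentalDomain (hf : IsDiffeoR 2 f) (hg : IsDiffeoR 1 g)
    (hfg : Function.Commute f g) (huy : u < y) (hfu : f u = u) (hlt : ∀ x ∈ Ioc u y, f x < x)
    (hgy : g y = y) : ∀ x ∈ Icc (f y) y, g x = x := by
  obtain ⟨C, hC⟩ := exists_deriv_iterate_le_mul hf huy hfu hlt
  have horbit n : f^[n] y ∈ Ioc u y :=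
    (mapsTo_Ioc_of_forall_lt hf.strictMono hfu hlt).iterate n ⟨huy, le_rfl⟩
  have htend x (hx : x ∈ Icc (f y) y) : Tendsto (fun n => f^[n] x) atTop (𝓝 u) :=
    tendsto_iterate_of_forall_lt hf.strictMono hf.continuous hfu hlt
      ⟨(horbit 1).1.trans_le hx.1, hx.2⟩
  have hfy : y ∈ Icc (f y) y := ⟨(hlt y ⟨huy, le_rfl⟩).le, le_rfl⟩
  have hgorbit n : g (f^[n] y) = f^[n] y := by rw [← (hfg.iterate_left n).eq, hgy]
  have hgu : g u = u := tendsto_nhds_unique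
    (((hg.continuous.tendsto u).comp (htend y hfy)).congr hgorbit) (htend y hfy)
  have hg'u : deriv g u = 1 := deriv_eq_one_of_tendsto_isFixedPt (hg.differentiable u) hgu
    (htend y hfy) (fun n => (horbit n).1.ne') hgorbit
  have hmaps : MapsTo g (Icc (f y) y) (Icc (f y) y) := fun x hx =>
    ⟨(hgorbit 1).symm.trans_le (hg.strictMono.monotone hx.1), hgy ▸ hg.strictMono.monotone hx.2⟩
  -- differentiating `g^[m] ∘ f^[n] = f^[n] ∘ g^[m]` and letting `n → ∞` (so that `f^[n] x → u`,
  -- where `(g^[m])' = 1`) bounds `(g^[m])'` from below on the fundamental domain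
  have hlower m x (hx : x ∈ Icc (f y) y) : 1 ≤ C * deriv g^[m] x := by
    have hgm := hg.iterate m
    have hle n : deriv g^[m] (f^[n] x) ≤ C * deriv g^[m] x := by
      rw [← mul_le_mul_iff_of_pos_right ((hf.iterate n).2.2 x)]
      calc deriv g^[m] (f^[n] x) * deriv f^[n] x
          = deriv f^[n] (g^[m] x) * deriv g^[m] x :=
            deriv_iterate_mul_comm hf.differentiable hg.differentiable hfg m n x
        _ ≤ C * deriv f^[n] x * deriv g^[m] x := by
            gcongr; exacts [(hgm.2.2 x).le, hC n x hx _ (hmaps.iterate m hx)]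
        _ = C * deriv g^[m] x * deriv f^[n] x := by ring
    have hgm_u : deriv g^[m] u = 1 := by
      simpa [hg'u] using (HasDerivAt.iterate u (hg.differentiable u).hasDerivAt hgu m).deriv
    exact le_of_tendsto' (hgm_u ▸ ((hgm.continuous_deriv le_rfl).tendsto u).comp (htend x hx)) hle
  have hCpos : 0 < C := by simpa using zero_lt_one.trans_le (hlower 0 y hfy)
  intro x hx
  refine apply_eq_self_of_le_deriv_iterate (inv_pos.2 hCpos) hmaps
    (fun m => (hg.iterate m).differentiable) (fun m x hx => ?_) hx
  rw [inv_le_iff_one_le_mul₀' hCpos]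
  exact hlower m x hx

theorem kopell_of_forall_lt (hf : IsDiffeoR 2 f) (hg : IsDiffeoR 1 g)
    (hfg : Function.Commute f g) (hfu : f u = u) (hlt : ∀ x ∈ Ioc u y, f x < x)
    (hgy : g y = y) : ∀ x ∈ Ioc u y, g x = x := by
  intro x hx
  have hy : y ∈ Ioc u y := ⟨hx.1.trans_le hx.2, le_rfl⟩
  have horbit n : f^[n] y ∈ Ioc u y :=
    (mapsTo_Ioc_of_forall_lt hf.strictMono hfu hlt).iterate n hy
  have hcover n : ∀ x ∈ Icc (f^[n] y) y, g x = x := by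
    induction n with
    | zero => intro x hx; rwa [le_antisymm hx.2 hx.1]
    | succ n ih =>
      intro x hx
      rcases le_total (f^[n] y) x with h | h
      · exact ih x ⟨h, hx.2⟩
      · refine kopell_fundamentalDomain hf hg hfg (horbit n).1 hfu
          (fun z hz => hlt z ⟨hz.1, hz.2.trans (horbit n).2⟩)
          (by rw [← (hfg.iterate_left n).eq, hgy]) x ⟨?_, h⟩
        rw [← iterate_succ_apply' f n y]
        exact hx.1
  obtain ⟨n, hn⟩ := ((tendsto_iterate_of_forall_lt hf.strictMono hf.continuous hfu hlt
    hy).eventually (gt_mem_nhds hx.1)).exists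
  exact hcover n x ⟨hn.le, hx.2⟩

theorem kopell_Ioc (hf : IsDiffeoR 2 f) (hg : IsDiffeoR 1 g) (hfg : Function.Commute f g)
    (hfu : f u = u) (hne : ∀ x ∈ Ioc u y, f x ≠ x) (hgy : g y = y) :
    ∀ x ∈ Ioc u y, g x = x := by
  rcases isPreconnected_Ioc.forall_lt_or_forall_gt hf.continuous.continuousOn hne with hlt | hgt
  · exact kopell_of_forall_lt hf hg hfg hfu hlt hgy
  · obtain ⟨f', hf', hl, hr⟩ := hf.exists_inverse
    refine kopell_of_forall_lt hf' hg (hfg.inverse_left hl hr) (by simpa [hfu] using hl u)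
      (fun x hx => ?_) hgy
    rw [← hf.strictMono.lt_iff_lt, hr x]
    exact hgt x hx

theorem kopell_Ico (hf : IsDiffeoR 2 f) (hg : IsDiffeoR 1 g) (hfg : Function.Commute f g)
    (hfu : f u = u) (hne : ∀ x ∈ Ico y u, f x ≠ x) (hgy : g y = y) :
    ∀ x ∈ Ico y u, g x = x := by
  intro x hx
  have hmem {z : ℝ} (hz : z ∈ Ioc (-u) (-y)) : -z ∈ Ico y u :=
    ⟨by linarith [hz.2], by linarith [hz.1]⟩
  have := kopell_Ioc hf.negConj hg.negConj hfg.negConj (u := -u) (y := -y) (by simp [hfu])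
    (fun z hz h => hne (-z) (hmem hz) (by simp at h; linarith)) (by simp [hgy]) (-x)
    ⟨by linarith [hx.2], by linarith [hx.1]⟩
  simpa using this

end Kopell

section Endpoints
variable {c h : ℝ → ℝ} {u v : ℝ}

theorem apply_left_endpoint_eq_of_commute (hc : IsDiffeoR 1 c) (hh : IsDiffeoR 2 h)
    (hhc : Function.Commute h c) (huv : u < v) (hcu : c u = u) (hcv : c v = v)
    (hfree : ∀ t ∈ Ioo u v, c t ≠ t) (hfix : ∃ x, h x = x) : h u = u := by
  by_contra hu
  have hF : IsClosed {x | h x = x} := isClosed_eq hh.continuous continuous_id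
  by_cases hA : ({x | h x = x} ∩ Ici u).Nonempty
  · -- Kopell between `u` and the first fixed point `p` of `h` above it
    have hbdd : BddBelow ({x | h x = x} ∩ Ici u) := ⟨u, fun x hx => hx.2⟩
    set p := sInf ({x | h x = x} ∩ Ici u)
    have hp : p ∈ {x | h x = x} ∩ Ici u := (hF.inter isClosed_Ici).csInf_mem hA hbdd
    have hup : u < p := hp.2.lt_of_ne fun hpu => hu (hpu ▸ hp.1)
    have hcp := kopell_Ico hh hc hhc hp.1
      (fun x hx hx' => (csInf_le hbdd ⟨hx', hx.1⟩).not_gt hx.2) hcu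
    obtain ⟨t, ht⟩ := exists_between (lt_min hup huv)
    exact hfree t ⟨ht.1, ht.2.trans_le (min_le_right _ _)⟩
      (hcp t ⟨ht.1.le, ht.2.trans_le (min_le_left _ _)⟩)
  · -- Kopell between the last fixed point `q < u` of `h` and `v`
    have hbelow : ∀ x ∈ {x | h x = x}, x < u := fun x hx => not_le.1 fun hux => hA ⟨x, hx, hux⟩
    have hbdd : BddAbove {x | h x = x} := ⟨u, fun x hx => (hbelow x hx).le⟩
    set q := sSup {x | h x = x}
    have hq : q ∈ {x | h x = x} := hF.csSup_mem hfix hbdd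
    have hcq := kopell_Ioc hh hc hhc hq (fun x hx hx' => (le_csSup hbdd hx').not_gt hx.1) hcv
    obtain ⟨t, ht⟩ := exists_between huv
    exact hfree t ht (hcq t ⟨(hbelow q hq).trans ht.1, ht.2.le⟩)

theorem apply_right_endpoint_eq_of_commute (hc : IsDiffeoR 1 c) (hh : IsDiffeoR 2 h)
    (hhc : Function.Commute h c) (huv : u < v) (hcu : c u = u) (hcv : c v = v)
    (hfree : ∀ t ∈ Ioo u v, c t ≠ t) (hfix : ∃ x, h x = x) : h v = v := by
  obtain ⟨x, hx⟩ := hfix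
  have := apply_left_endpoint_eq_of_commute hc.negConj hh.negConj hhc.negConj (u := -v) (v := -u)
    (neg_lt_neg huv) (by simp [hcv]) (by simp [hcu])
    (fun t ht hct => hfree (-t) ⟨by linarith [ht.2], by linarith [ht.1]⟩ (by simp at hct; linarith))
    ⟨-x, by simp [hx]⟩
  simpa using this

end Endpoints

section OrbitEscape
variable {α : Type*} [ConditionallyCompleteLinearOrder α] [TopologicalSpace α] [OrderTopology α]
  {φ : α → α} {x w : α}

theorem exists_lt_iterate_of_forall_lt (hφ : Continuous φ) (hmono : Monotone φ)
    (hlt : ∀ z ∈ Icc x w, z < φ z) : ∃ n, w < φ^[n] x := by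
  by_contra! h
  have horbit : Monotone fun n => φ^[n] x :=
    hmono.monotone_iterate_of_le_map (hlt x ⟨le_rfl, h 0⟩).le
  have hbdd : BddAbove (range fun n => φ^[n] x) := ⟨w, by rintro _ ⟨n, rfl⟩; exact h n⟩
  have hfix := isFixedPt_of_tendsto_iterate (tendsto_atTop_ciSup horbit hbdd) hφ.continuousAt
  exact (hlt _ ⟨le_ciSup hbdd 0, ciSup_le h⟩).ne hfix.symm

theorem exists_iterate_lt_of_forall_lt (hφ : Continuous φ) (hmono : Monotone φ)
    (hlt : ∀ z ∈ Icc w x, φ z < z) : ∃ n, φ^[n] x < w :=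
  exists_lt_iterate_of_forall_lt (α := αᵒᵈ) hφ hmono.dual fun z hz => hlt z ⟨hz.2, hz.1⟩

end OrbitEscape

theorem Group.exists_commutatorElement_ne_one_mem_center {N : Type*} [Group N]
    [Group.IsNilpotent N] (h : ¬ ∀ a b : N, a * b = b * a) :
    ∃ a b : N, ⁅a, b⁆ ≠ 1 ∧ ⁅a, b⁆ ∈ Subgroup.center N := by
  have h12 : Subgroup.upperCentralSeries N 1 ≠ Subgroup.upperCentralSeries N 2 := fun h12 =>
    h fun a b => by
      have htop := Subgroup.upperCentralSeries.eq_top (by norm_num) h12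
      rw [Subgroup.upperCentralSeries_one] at htop
      exact (Subgroup.mem_center_iff.mp (htop ▸ Subgroup.mem_top a) b).symm
  obtain ⟨a, ha₂, ha₁⟩ :
      ∃ a ∈ Subgroup.upperCentralSeries N 2, a ∉ Subgroup.upperCentralSeries N 1 := by
    by_contra! h'
    exact h12 (le_antisymm (Subgroup.upperCentralSeries_mono N (by norm_num)) h')
  rw [Subgroup.upperCentralSeries_one, Subgroup.mem_center_iff] at ha₁
  obtain ⟨b, hb⟩ := not_forall.mp ha₁
  refine ⟨a, b, fun h1 => hb (commutatorElement_eq_one_iff_mul_comm.mp h1).symm, ?_⟩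
  simpa [Subgroup.upperCentralSeries_one] using Subgroup.mem_upperCentralSeries_succ_iff.mp ha₂ b

section Action
variable {G : Type*} [Group G]

theorem sq_mul_sq_eq_commutatorElement_pow_mul {a b : G}
    (hc : ⁅a, b⁆ ∈ Subgroup.center G) : a ^ 2 * b ^ 2 = ⁅a, b⁆ ^ 4 * (b ^ 2 * a ^ 2) := by
  set c := ⁅a, b⁆
  have hconj : MulAut.conj a b = c * b := by simp [c, commutatorElement_def]
  have hca : MulAut.conj a c = c := by
    rw [MulAut.conj_apply, Subgroup.mem_center_iff.mp hc a, mul_inv_cancel_right]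
  have hcb : Commute c b := (Subgroup.mem_center_iff.mp hc b).symm
  have h : MulAut.conj (a ^ 2) (b ^ 2) = c ^ 4 * b ^ 2 := by
    rw [map_pow MulAut.conj a 2, pow_two, MulAut.mul_apply, map_pow, hconj, hcb.mul_pow, map_mul,
      map_pow, map_pow, hca, hconj, hcb.mul_pow]
    group
  rw [MulAut.conj_apply, mul_inv_eq_iff_eq_mul] at h
  rw [h, mul_assoc]

theorem commute_smul_of_mem_center {α : Type*} [MulAction G α] {c : G}
    (hc : c ∈ Subgroup.center G) (g : G) : Function.Commute (g • · : α → α) (c • ·) := fun x => by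
  show g • c • x = c • g • x
  rw [smul_smul, smul_smul, Subgroup.mem_center_iff.mp hc g]

theorem smul_eq_of_isGreatest {α : Type*} [PartialOrder α] [MulAction G α]
    (hmono : ∀ g : G, Monotone fun x : α => g • x) {S : Set α} (hS : ∀ g : G, MapsTo (g • ·) S S)
    {u : α} (hu : IsGreatest S u) (g : G) : g • u = u :=
  le_antisymm (hu.2 (hS g hu.1)) (by simpa using hmono g (hu.2 (hS g⁻¹ hu.1)))

theorem smul_eq_of_isLeast {α : Type*} [PartialOrder α] [MulAction G α]
    (hmono : ∀ g : G, Monotone fun x : α => g • x) {S : Set α} (hS : ∀ g : G, MapsTo (g • ·) S S)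
    {v : α} (hv : IsLeast S v) (g : G) : g • v = v :=
  le_antisymm (by simpa using hmono g (hv.2 (hS g⁻¹ hv.1))) (hv.2 (hS g hv.1))

variable [MulAction G ℝ]

theorem strictMono_zpow_smul {c : G} {R : Set ℝ} (hcR : ∀ k : ℤ, MapsTo (c ^ k • ·) R R)
    (hlt : ∀ x ∈ R, x < c • x) {x₀ : ℝ} (hx₀ : x₀ ∈ R) : StrictMono fun k : ℤ => c ^ k • x₀ :=
  strictMono_int_of_lt_succ fun k => by
    rw [add_comm, zpow_one_add, mul_smul]
    exact hlt _ (hcR k hx₀)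

theorem exists_zpow_smul_le_lt (hmono : ∀ g : G, StrictMono fun x : ℝ => g • x)
    (hcont : ∀ g : G, Continuous fun x : ℝ => g • x) {c : G} {R : Set ℝ} (hR : R.OrdConnected)
    (hcR : ∀ k : ℤ, MapsTo (c ^ k • ·) R R) (hlt : ∀ x ∈ R, x < c • x) {x₀ w : ℝ}
    (hx₀ : x₀ ∈ R) (hw : w ∈ R) : ∃ i : ℤ, c ^ i • x₀ ≤ w ∧ w < c ^ (i + 1) • x₀ := by
  have hup : ∃ k : ℤ, w < c ^ k • x₀ := by
    rcases lt_or_ge w x₀ with h | h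
    · exact ⟨0, by simpa using h⟩
    · obtain ⟨n, hn⟩ := exists_lt_iterate_of_forall_lt (hcont c) (hmono c).monotone
        fun z hz => hlt z (hR.out hx₀ hw hz)
      exact ⟨n, by simpa [smul_iterate_apply] using hn⟩
  have hdown : ∃ k : ℤ, c ^ k • x₀ ≤ w := by
    rcases le_or_gt x₀ w with h | h
    · exact ⟨0, by simpa using h⟩
    · obtain ⟨n, hn⟩ := exists_iterate_lt_of_forall_lt (hcont c⁻¹) (hmono c⁻¹).monotone
        fun z hz => by simpa using hlt _ (hcR (-1) (hR.out hw hx₀ hz))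
      exact ⟨-n, by simpa [smul_iterate_apply, zpow_neg] using hn.le⟩
  obtain ⟨k, hk⟩ := hup
  obtain ⟨i, hi, hmax⟩ := Int.exists_greatest_of_bdd
    ⟨k, fun z hz => ((strictMono_zpow_smul hcR hlt hx₀).lt_iff_lt.mp (hz.trans_lt hk)).le⟩ hdown
  exact ⟨i, hi, not_le.mp fun h => (hmax _ h).not_gt (lt_add_one i)⟩

theorem not_forall_lt_commutatorElement_smul {a b : G}
    (hmono : ∀ g : G, StrictMono fun x : ℝ => g • x)
    (hcont : ∀ g : G, Continuous fun x : ℝ => g • x)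
    (hc : ⁅a, b⁆ ∈ Subgroup.center G) {R : Set ℝ} (hR : R.OrdConnected) (hRne : R.Nonempty)
    (hinv : ∀ g : G, MapsTo (g • ·) R R) : ¬ ∀ x ∈ R, x < ⁅a, b⁆ • x := by
  intro hlt
  obtain ⟨x₀, hx₀⟩ := hRne
  set c := ⁅a, b⁆
  set T : ℤ → ℝ := fun k => c ^ k • x₀
  have hT_add i j : c ^ j • T i = T (i + j) := by simp only [T, smul_smul, ← zpow_add, add_comm]
  have hT_shift (g : G) k : g • T k = c ^ k • g • x₀ := by
    simp only [T, smul_smul, Subgroup.mem_center_iff.mp (Subgroup.zpow_mem _ hc k) g]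
  obtain ⟨i, hi₁, hi₂⟩ :=
    exists_zpow_smul_le_lt hmono hcont hR (fun k => hinv _) hlt hx₀ (hinv (a ^ 2) hx₀)
  obtain ⟨j, hj₁, hj₂⟩ :=
    exists_zpow_smul_le_lt hmono hcont hR (fun k => hinv _) hlt hx₀ (hinv (b ^ 2) hx₀)
  have hlow : T (i + j + 4) ≤ a ^ 2 • b ^ 2 • x₀ := calc
    T (i + j + 4) = c ^ (4 : ℤ) • c ^ i • T j := by rw [hT_add, hT_add]; ring_nf
    _ ≤ c ^ (4 : ℤ) • c ^ i • b ^ 2 • x₀ := (hmono _).monotone <| (hmono _).monotone hj₁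
    _ = c ^ (4 : ℤ) • b ^ 2 • T i := by rw [hT_shift]
    _ ≤ c ^ (4 : ℤ) • b ^ 2 • a ^ 2 • x₀ := (hmono _).monotone <| (hmono _).monotone hi₁
    _ = a ^ 2 • b ^ 2 • x₀ := by
      simp only [smul_smul, sq_mul_sq_eq_commutatorElement_pow_mul hc, zpow_ofNat, c]
  have hhigh : a ^ 2 • b ^ 2 • x₀ < T (i + j + 2) := calc
    a ^ 2 • b ^ 2 • x₀ < a ^ 2 • T (j + 1) := hmono _ hj₂
    _ = c ^ (j + 1) • a ^ 2 • x₀ := hT_shift _ _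
    _ < c ^ (j + 1) • T (i + 1) := hmono _ hi₂
    _ = T (i + j + 2) := by rw [hT_add]; ring_nf
  have := (strictMono_zpow_smul (fun k => hinv _) hlt hx₀).lt_iff_lt.mp (hlow.trans_lt hhigh)
  omega

theorem exists_mem_commutatorElement_smul_eq {a b : G}
    (hmono : ∀ g : G, StrictMono fun x : ℝ => g • x)
    (hcont : ∀ g : G, Continuous fun x : ℝ => g • x)
    (hc : ⁅a, b⁆ ∈ Subgroup.center G) {R : Set ℝ} (hR : R.OrdConnected) (hRne : R.Nonempty)
    (hinv : ∀ g : G, MapsTo (g • ·) R R) : ∃ x ∈ R, ⁅a, b⁆ • x = x := by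
  by_contra! hne
  rcases hR.isPreconnected.forall_lt_or_forall_gt (hcont _).continuousOn hne with hlt | hgt
  · refine not_forall_lt_commutatorElement_smul hmono hcont (commutatorElement_inv a b ▸ inv_mem hc)
      hR hRne hinv fun x hx => ?_
    have h : ⁅a, b⁆⁻¹ • ⁅a, b⁆ • x < ⁅a, b⁆⁻¹ • x := hmono _ (hlt x hx)
    rwa [inv_smul_smul, commutatorElement_inv] at h
  · exact not_forall_lt_commutatorElement_smul hmono hcont hc hR hRne hinv hgt

theorem mapsTo_Ioo_of_mem_center (hdiff : ∀ g : G, IsDiffeoR 2 fun x : ℝ => g • x)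
    (hfix : ∀ g : G, ∃ x : ℝ, g • x = x) {c : G} (hc : c ∈ Subgroup.center G) {u v : ℝ}
    (huv : u < v) (hcu : c • u = u) (hcv : c • v = v) (hfree : ∀ t ∈ Ioo u v, c • t ≠ t)
    (g : G) : MapsTo (g • ·) (Ioo u v) (Ioo u v) := by
  have hc1 := (hdiff c).of_le one_le_two
  have hmaps := (hdiff g).strictMono.mapsTo_Ioo (a := u) (b := v)
  rwa [apply_left_endpoint_eq_of_commute hc1 (hdiff g) (commute_smul_of_mem_center hc g) huv hcu
    hcv hfree (hfix g), apply_right_endpoint_eq_of_commute hc1 (hdiff g)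
    (commute_smul_of_mem_center hc g) huv hcu hcv hfree (hfix g)] at hmaps

theorem exists_invariant_ordConnected_of_smul_ne
    (hdiff : ∀ g : G, IsDiffeoR 2 fun x : ℝ => g • x) (hfix : ∀ g : G, ∃ x : ℝ, g • x = x)
    {c : G} (hc : c ∈ Subgroup.center G) {x₀ : ℝ} (hx₀ : c • x₀ ≠ x₀) :
    ∃ R : Set ℝ, R.OrdConnected ∧ x₀ ∈ R ∧ (∀ g : G, MapsTo (g • ·) R R) ∧
      ∀ x ∈ R, c • x ≠ x := by
  set S := fixedPoints (c • · : ℝ → ℝ)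
  have hSinv (g : G) : MapsTo (g • ·) S S := (commute_smul_of_mem_center hc g).mapsTo_fixedPoints
  have hmono (g : G) : Monotone fun x : ℝ => g • x := (hdiff g).strictMono.monotone
  have hS : IsClosed S := isClosed_fixedPoints (hdiff c).continuous
  have hmax (hL : (S ∩ Iic x₀).Nonempty) :=
    (hS.inter isClosed_Iic).isGreatest_csSup hL ⟨x₀, fun _ h => h.2⟩
  have hmin (hU : (S ∩ Ici x₀).Nonempty) :=
    (hS.inter isClosed_Ici).isLeast_csInf hU ⟨x₀, fun _ h => h.2⟩
  have hlt {u} (hu : u ∈ S ∩ Iic x₀) : u < x₀ := hu.2.lt_of_ne fun h => hx₀ (h ▸ hu.1)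
  have hgt {v} (hv : v ∈ S ∩ Ici x₀) : x₀ < v := hv.2.lt_of_ne' fun h => hx₀ (h ▸ hv.1)
  by_cases hL : (S ∩ Iic x₀).Nonempty <;> by_cases hU : (S ∩ Ici x₀).Nonempty
  · have hu := hmax hL
    have hv := hmin hU
    have hfree : ∀ t ∈ Ioo (sSup (S ∩ Iic x₀)) (sInf (S ∩ Ici x₀)), c • t ≠ t :=
      fun t ht hct => (le_total t x₀).elim (fun h => (hu.2 ⟨hct, h⟩).not_gt ht.1)
        (fun h => (hv.2 ⟨hct, h⟩).not_gt ht.2)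
    exact ⟨_, ordConnected_Ioo, ⟨hlt hu.1, hgt hv.1⟩, mapsTo_Ioo_of_mem_center hdiff hfix hc
      ((hlt hu.1).trans (hgt hv.1)) hu.1.1 hv.1.1 hfree, hfree⟩
  · have hu := hmax hL
    set u := sSup (S ∩ Iic x₀)
    have hSu : IsGreatest S u :=
      ⟨hu.1.1, fun s hs => hu.2 ⟨hs, show s ≤ x₀ from le_of_not_gt fun h => hU ⟨s, hs, h.le⟩⟩⟩
    refine ⟨Ioi u, ordConnected_Ioi, hlt hu.1, fun g => ?_, fun t ht hct => (hSu.2 hct).not_gt ht⟩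
    simpa only [smul_eq_of_isGreatest hmono hSinv hSu g] using
      (hdiff g).strictMono.mapsTo_Ioi (a := u)
  · have hv := hmin hU
    set v := sInf (S ∩ Ici x₀)
    have hSv : IsLeast S v :=
      ⟨hv.1.1, fun s hs => hv.2 ⟨hs, show x₀ ≤ s from le_of_not_gt fun h => hL ⟨s, hs, h.le⟩⟩⟩
    refine ⟨Iio v, ordConnected_Iio, hgt hv.1, fun g => ?_, fun t ht hct => (hSv.2 hct).not_gt ht⟩
    simpa only [smul_eq_of_isLeast hmono hSinv hSv g] using
      (hdiff g).strictMono.mapsTo_Iio (b := v)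
  · obtain ⟨s, hs⟩ := hfix c
    exact ((le_total s x₀).elim (fun h => hL ⟨s, hs, h⟩) fun h => hU ⟨s, hs, h⟩).elim

end Action

/-- If `N` is a nilpotent group of orientation-preserving `C²` diffeomorphisms
of `ℝ` and every element of `N` has a fixed point, then `N` is abelian.  The
group is encoded as an abstract nilpotent group `N` with a faithful action `ρ`
on `ℝ` by orientation-preserving `C²` diffeomorphisms. -/
theorem abelian_of_nilpotent_C2_diffeos_R_with_fixed_points
    {N : Type*} [Group N] [Group.IsNilpotent N] (ρ : N → ℝ → ℝ)
    (hmul : ∀ g h : N, ρ (g * h) = ρ g ∘ ρ h)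
    (hone : ρ 1 = id)
    (hdiff : ∀ g : N, IsDiffeoR 2 (ρ g))
    (hfaithful : ∀ g : N, ρ g = id → g = 1)
    (hfix : ∀ g : N, ∃ x : ℝ, ρ g x = x) :
    ∀ a b : N, a * b = b * a := by
  let : MulAction N ℝ :=
    { smul := ρ
      one_smul := fun x => congrFun hone x
      mul_smul := fun g h x => congrFun (hmul g h) x }
  by_contra hnc
  obtain ⟨a, b, hne, hc⟩ := Group.exists_commutatorElement_ne_one_mem_center hnc
  obtain ⟨x₀, hx₀⟩ : ∃ x, ⁅a, b⁆ • x ≠ x := not_forall.mp fun h => hne (hfaithful _ (funext h))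
  obtain ⟨R, hR, hx₀R, hinv, hfree⟩ := exists_invariant_ordConnected_of_smul_ne hdiff hfix hc hx₀
  obtain ⟨x, hx, hcx⟩ := exists_mem_commutatorElement_smul_eq (fun g => (hdiff g).strictMono)
    (fun g => (hdiff g).continuous) hc hR ⟨x₀, hx₀R⟩ hinv
  exact hfree x hx hcx
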